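/- The direct product of two finite groups, each of which is a nontrivial C(p)-group (every subgroup of order p is complemented and p divides the group order), is again a nontrivial C(p)-group. -/

import Mathlib

/-!
A subgroup `A` of order `p` of `G₁ × G₂` is not contained in the kernels of both projections,
so by primality it meets one of them, say the kernel of `π : G₁ × G₂ → Gᵢ`, trivially. Then
`π(A)` has order `p` in `Gᵢ`, and the preimage under `π` of a complement of `π(A)` is a
complement of `A`.
-/

open Pointwise

/-- A subgroup `A` of `G` is complemented if there is `K ≤ G` with `G = AK` and `A ∩ K = 1`. -/
def Complemented {G : Type*} [Group G] (A : Subgroup G) : Prop :=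
  ∃ K : Subgroup G, (A : Set G) * (K : Set G) = Set.univ ∧ A ⊓ K = ⊥

/-- A finite group is a nontrivial `C(p)`-group if `p` divides its order and every
subgroup of order `p` has a complement. -/
def NontrivialCp (p : ℕ) (G : Type*) [Group G] : Prop :=
  p ∣ Nat.card G ∧ ∀ A : Subgroup G, Nat.card A = p → Complemented A

section

variable {G H : Type*} [Group G] [Group H]

theorem Complemented.of_map {f : G →* H} {A : Subgroup G}
    (hA : A ⊓ f.ker = ⊥) (hcompl : Complemented (A.map f)) : Complemented A := by
  obtain ⟨K, hmul, hinf⟩ := hcompl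
  refine ⟨K.comap f, Set.eq_univ_of_forall fun g => ?_, eq_bot_iff.mpr ?_⟩
  · obtain ⟨_, ⟨a, ha, rfl⟩, k, hk, hak⟩ : f g ∈ (A.map f : Set H) * K := hmul ▸ Set.mem_univ _
    refine ⟨a, ha, a⁻¹ * g, ?_, mul_inv_cancel_left a g⟩
    change f (a⁻¹ * g) ∈ K
    rwa [map_mul, map_inv, ← hak, inv_mul_cancel_left]
  · rintro a ⟨ha, hak⟩
    have hfa : f a ∈ A.map f ⊓ K := ⟨⟨a, ha, rfl⟩, hak⟩
    rw [hinf, Subgroup.mem_bot] at hfa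
    exact hA ▸ ⟨ha, hfa⟩

theorem Subgroup.card_map_of_inf_ker_eq_bot (f : G →* H) {A : Subgroup G} (hA : A ⊓ f.ker = ⊥) :
    Nat.card (A.map f) = Nat.card A := by
  rw [← Subgroup.relIndex_ker, ← Subgroup.inf_relIndex_left, hA, Subgroup.relIndex_bot_left]

theorem Subgroup.inf_eq_bot_or_le_of_card_prime {A : Subgroup G} (hA : (Nat.card A).Prime)
    (K : Subgroup G) : A ⊓ K = ⊥ ∨ A ≤ K := by
  have : Finite A := Nat.finite_of_card_ne_zero hA.ne_zero
  rcases hA.eq_one_or_self_of_dvd _ (Subgroup.card_dvd_of_le (inf_le_left : A ⊓ K ≤ A)) with h | h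
  · exact .inl (Subgroup.card_eq_one.mp h)
  · exact .inr (inf_eq_left.mp (Subgroup.eq_of_le_of_card_ge inf_le_left h.ge))

theorem Complemented.of_card_prime_of_prod {p : ℕ} (hp : p.Prime)
    (hG : ∀ B : Subgroup G, Nat.card B = p → Complemented B)
    (hH : ∀ B : Subgroup H, Nat.card B = p → Complemented B)
    {A : Subgroup (G × H)} (hA : Nat.card A = p) : Complemented A := by
  rcases Subgroup.inf_eq_bot_or_le_of_card_prime (hA ▸ hp) (MonoidHom.fst G H).ker with h | hfst
  · exact .of_map h (hG _ (Subgroup.card_map_of_inf_ker_eq_bot _ h ▸ hA))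
  rcases Subgroup.inf_eq_bot_or_le_of_card_prime (hA ▸ hp) (MonoidHom.snd G H).ker with h | hsnd
  · exact .of_map h (hH _ (Subgroup.card_map_of_inf_ker_eq_bot _ h ▸ hA))
  have hbot : A = ⊥ := eq_bot_iff.mpr fun g hg =>
    Prod.ext (MonoidHom.mem_ker.mp (hfst hg)) (MonoidHom.mem_ker.mp (hsnd hg))
  rw [hbot, Subgroup.card_bot] at hA
  exact absurd hA.symm hp.ne_one

end

theorem stmt_18_general (p : ℕ) (hp : p.Prime) (G₁ G₂ : Type*) [Group G₁] [Group G₂]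
    (h₁ : NontrivialCp p G₁) (h₂ : NontrivialCp p G₂) :
    NontrivialCp p (G₁ × G₂) :=
  ⟨Nat.card_prod G₁ G₂ ▸ h₁.1.mul_right _,
    fun _ hA => Complemented.of_card_prime_of_prod hp h₁.2 h₂.2 hA⟩

/-- The direct product of two nontrivial `C(p)`-groups is a nontrivial `C(p)`-group. -/
theorem stmt_18 (p : ℕ) (hp : p.Prime) (G₁ G₂ : Type*) [Group G₁] [Group G₂]
    [Finite G₁] [Finite G₂] (h₁ : NontrivialCp p G₁) (h₂ : NontrivialCp p G₂) :
    NontrivialCp p (G₁ × G₂) :=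
  stmt_18_general p hp G₁ G₂ h₁ h₂
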